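/- Let p be a prime, α a positive integer, and G a finite abelian p-group of order p^α with rank at least 2. If G = MS is a complete splitting (M ⊆ ℤ, S ⊆ G, every element of G having a unique representation m·s), then |M| = 1. -/

import Mathlib

/-!
If `0 ∈ S`, then `m • 0 = 0` for every `m ∈ M`, so uniqueness of representations forces
`|M| = 1`. Otherwise `0 = m • s` with `s ≠ 0` of order `p^c`, `c ≥ 1`, and `p^c ∣ m`. As
`m' ↦ m' • s` is injective on `M` and `s' ↦ m • s'` is injective on `S` with values in `p^c G`,
`|G| = |M| |S| ≤ p^c |p^c G| = p^c |G| / |G[p^c]|`. Hence `G[p^c] = ⟨s⟩`, so `G[p] ≤ ⟨s⟩`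
has at most `p` elements. But `|G[p^e]| ≤ |G[p]|^e`, and `G` is killed by its exponent `p^e`, so
`|G| ≤ p^e = exp G` and `G` would be cyclic.
-/

open AddSubgroup

section Torsion

variable {G : Type*} [AddCommGroup G]

lemma ker_nsmul_mono {m n : ℕ} (h : m ∣ n) :
    (nsmulAddMonoidHom m : G →+ G).ker ≤ (nsmulAddMonoidHom n).ker := by
  obtain ⟨k, rfl⟩ := h
  intro x hx
  simp_all [mul_nsmul]

lemma card_ker_nsmul_le_of_le_zmultiples {n : ℕ} (hn : 0 < n) {g : G}
    (h : (nsmulAddMonoidHom n : G →+ G).ker ≤ zmultiples g) :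
    Nat.card (nsmulAddMonoidHom n : G →+ G).ker ≤ n := by
  have := isAddCyclic_of_le h
  rw [← IsAddCyclic.exponent_eq_card]
  exact Nat.le_of_dvd hn (AddMonoid.exponent_dvd_of_forall_nsmul_eq_zero fun x => Subtype.ext x.2)

variable [Finite G]

/-- Multiplication by `n` maps `G[m * n]` into `G[m]`, with kernel `G[n]`. -/
lemma card_ker_nsmul_mul_le (m n : ℕ) :
    Nat.card (nsmulAddMonoidHom (m * n) : G →+ G).ker ≤
      Nat.card (nsmulAddMonoidHom m : G →+ G).ker *
        Nat.card (nsmulAddMonoidHom n : G →+ G).ker := by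
  set f := (nsmulAddMonoidHom n : G →+ G).comp (nsmulAddMonoidHom (m * n)).ker.subtype
  have hrange : f.range ≤ (nsmulAddMonoidHom m).ker := by
    rintro _ ⟨x, rfl⟩
    have hx : (m * n) • (x : G) = 0 := x.2
    simpa [f, mul_nsmul'] using hx
  have hker : Nat.card f.ker ≤ Nat.card (nsmulAddMonoidHom n : G →+ G).ker :=
    Nat.card_le_card_of_injective (fun x => ⟨x.1.1, x.2⟩)
      fun x y hxy => Subtype.ext (Subtype.ext (congrArg Subtype.val hxy :))
  rw [← card_mul_index f.ker, index_ker, mul_comm]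
  exact Nat.mul_le_mul (card_le_of_le hrange) hker

lemma card_ker_nsmul_pow_le (n e : ℕ) :
    Nat.card (nsmulAddMonoidHom (n ^ e) : G →+ G).ker ≤
      Nat.card (nsmulAddMonoidHom n : G →+ G).ker ^ e := by
  induction e with
  | zero => simp
  | succ e ih =>
    rw [pow_succ, pow_succ]
    exact (card_ker_nsmul_mul_le _ _).trans (Nat.mul_le_mul_right _ ih)

lemma isAddCyclic_of_card_ker_nsmul_le {p α : ℕ} (hp : p.Prime) (hcard : Nat.card G = p ^ α)
    (h : Nat.card (nsmulAddMonoidHom p : G →+ G).ker ≤ p) : IsAddCyclic G := by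
  obtain ⟨g, hg⟩ := AddMonoid.exists_addOrderOf_eq_exponent (G := G) .of_finite
  obtain ⟨e, -, he⟩ := (Nat.dvd_prime_pow hp).1 (hcard ▸ AddGroup.exponent_dvd_nat_card)
  have htop : (nsmulAddMonoidHom (p ^ e) : G →+ G).ker = ⊤ :=
    eq_top_iff.2 fun x _ => by simpa [← he] using AddMonoid.exponent_nsmul_eq_zero x
  refine isAddCyclic_of_card_le_addOrderOf g ?_
  calc Nat.card G = Nat.card (nsmulAddMonoidHom (p ^ e) : G →+ G).ker := by rw [htop, card_top]
    _ ≤ Nat.card (nsmulAddMonoidHom p : G →+ G).ker ^ e := card_ker_nsmul_pow_le p e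
    _ ≤ p ^ e := Nat.pow_le_pow_left h e
    _ = addOrderOf g := by rw [hg, he]

end Torsion

def IsCompleteSplitting {G : Type*} [AddCommGroup G] (M : Finset ℤ) (S : Finset G) : Prop :=
  ∀ x : G, ∃! q : ℤ × G, q.1 ∈ M ∧ q.2 ∈ S ∧ q.1 • q.2 = x

namespace IsCompleteSplitting

variable {G : Type*} [AddCommGroup G] {M : Finset ℤ} {S : Finset G}

lemma eq_of_smul_eq (h : IsCompleteSplitting M S) {m₁ m₂ : ℤ} {s₁ s₂ : G}
    (hm₁ : m₁ ∈ M) (hs₁ : s₁ ∈ S) (hm₂ : m₂ ∈ M) (hs₂ : s₂ ∈ S)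
    (heq : m₁ • s₁ = m₂ • s₂) : m₁ = m₂ ∧ s₁ = s₂ :=
  Prod.ext_iff.1 <| (h (m₁ • s₁)).unique (y₁ := (m₁, s₁)) (y₂ := (m₂, s₂))
    ⟨hm₁, hs₁, rfl⟩ ⟨hm₂, hs₂, heq.symm⟩

lemma card_eq_one_of_zero_mem (h : IsCompleteSplitting M S) (h0 : (0 : G) ∈ S) : M.card = 1 := by
  obtain ⟨⟨m, s⟩, ⟨hm, -, -⟩, -⟩ := h 0
  refine Finset.card_eq_one.2 ⟨m, Finset.eq_singleton_iff_unique_mem.2 ⟨hm, fun m' hm' => ?_⟩⟩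
  exact (h.eq_of_smul_eq hm' h0 hm h0 (by simp)).1

lemma card_mul_card (h : IsCompleteSplitting M S) : M.card * S.card = Nat.card G := by
  rw [← Finset.card_product, ← Set.ncard_coe_finset, ← Nat.card_coe_set_eq]
  refine Nat.card_eq_of_bijective (fun q => q.1.1 • q.1.2) ⟨?_, fun x => ?_⟩
  · rintro ⟨⟨m₁, s₁⟩, hq₁⟩ ⟨⟨m₂, s₂⟩, hq₂⟩ heq
    rw [Finset.coe_product, Set.mem_prod] at hq₁ hq₂
    obtain ⟨rfl, rfl⟩ := h.eq_of_smul_eq hq₁.1 hq₁.2 hq₂.1 hq₂.2 heq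
    rfl
  · obtain ⟨q, ⟨hm, hs, hx⟩, -⟩ := h x
    exact ⟨⟨q, by simp [hm, hs]⟩, hx⟩

variable [Finite G]

lemma card_le_addOrderOf (h : IsCompleteSplitting M S) {s : G} (hs : s ∈ S) :
    M.card ≤ addOrderOf s := by
  rw [← Set.ncard_coe_finset, ← Nat.card_zmultiples, ← Nat.card_coe_set_eq]
  refine Set.ncard_le_ncard_of_injOn (· • s) (fun m _ => zsmul_mem_zmultiples s m) ?_
  exact fun m₁ hm₁ m₂ hm₂ heq => (h.eq_of_smul_eq hm₁ hs hm₂ hs heq).1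

lemma card_le_card_range_nsmul (h : IsCompleteSplitting M S) {m : ℤ} {n : ℕ} (hm : m ∈ M)
    (hn : (n : ℤ) ∣ m) :
    S.card ≤ Nat.card (nsmulAddMonoidHom n : G →+ G).range := by
  obtain ⟨k, rfl⟩ := hn
  rw [← Set.ncard_coe_finset, ← Nat.card_coe_set_eq]
  refine Set.ncard_le_ncard_of_injOn (((n : ℤ) * k) • ·) (fun s _ => ⟨k • s, ?_⟩) ?_
  · simp [mul_zsmul, natCast_zsmul]
  · exact fun s₁ hs₁ s₂ hs₂ heq => (h.eq_of_smul_eq hm hs₁ hm hs₂ heq).2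

/-- With `n = ord s`: `|G| = |M| |S| ≤ n |n G|` and `|G| = |G[n]| |n G|`. -/
lemma ker_nsmul_addOrderOf_le_zmultiples (h : IsCompleteSplitting M S) {m : ℤ} {s : G}
    (hm : m ∈ M) (hs : s ∈ S) (h0 : m • s = 0) :
    (nsmulAddMonoidHom (addOrderOf s) : G →+ G).ker ≤ zmultiples s := by
  set n := addOrderOf s
  have hn : 0 < n := addOrderOf_pos s
  have hle : zmultiples s ≤ (nsmulAddMonoidHom n : G →+ G).ker := by
    rw [zmultiples_le]
    exact addOrderOf_nsmul_eq_zero s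
  have hrange := h.card_le_card_range_nsmul hm (addOrderOf_dvd_iff_zsmul_eq_zero.2 h0)
  have hcard : Nat.card (nsmulAddMonoidHom n : G →+ G).ker ≤ n := by
    have := card_mul_index (nsmulAddMonoidHom n : G →+ G).ker
    rw [index_ker, ← h.card_mul_card] at this
    have hpos : 0 < Nat.card (nsmulAddMonoidHom n : G →+ G).range := Nat.card_pos
    refine le_of_mul_le_mul_right (this.trans_le ?_) hpos
    exact Nat.mul_le_mul (h.card_le_addOrderOf hs) hrange
  exact (eq_of_le_of_card_ge hle (by rwa [Nat.card_zmultiples])).ge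

end IsCompleteSplitting

theorem stmt_4_general {G : Type*} [AddCommGroup G] [Fintype G]
    (p : ℕ) (hp : p.Prime) (α : ℕ)
    (hcard : Fintype.card G = p ^ α)
    (hrank : ¬ IsAddCyclic G)
    (M : Finset ℤ) (S : Finset G)
    (hCS : ∀ x : G, ∃! q : ℤ × G, q.1 ∈ M ∧ q.2 ∈ S ∧ q.1 • q.2 = x) :
    M.card = 1 := by
  have hCS : IsCompleteSplitting M S := hCS
  rw [← Nat.card_eq_fintype_card] at hcard
  by_cases h0 : (0 : G) ∈ S
  · exact hCS.card_eq_one_of_zero_mem h0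
  obtain ⟨⟨m, s⟩, ⟨hm, hs, hms⟩, -⟩ := hCS 0
  obtain ⟨c, -, hc⟩ := (Nat.dvd_prime_pow hp).1 (hcard ▸ addOrderOf_dvd_natCard s)
  have hc0 : c ≠ 0 := by
    rintro rfl
    exact h0 (AddMonoid.addOrderOf_eq_one_iff.1 hc ▸ hs)
  have hker : (nsmulAddMonoidHom p : G →+ G).ker ≤ zmultiples s :=
    (ker_nsmul_mono (dvd_pow_self p hc0)).trans
      (hc ▸ hCS.ker_nsmul_addOrderOf_le_zmultiples hm hs hms)
  exact absurd (isAddCyclic_of_card_ker_nsmul_le hp hcard <|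
    card_ker_nsmul_le_of_le_zmultiples hp.pos hker) hrank

theorem stmt_4 {G : Type*} [AddCommGroup G] [Fintype G]
    (p : ℕ) (hp : p.Prime) (α : ℕ) (hα : 0 < α)
    (hcard : Fintype.card G = p ^ α)
    (hrank : ¬ IsAddCyclic G)
    (M : Finset ℤ) (S : Finset G)
    (hCS : ∀ x : G, ∃! q : ℤ × G, q.1 ∈ M ∧ q.2 ∈ S ∧ q.1 • q.2 = x) :
    M.card = 1 :=
  stmt_4_general p hp α hcard hrank M S hCS
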